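/- Assume (H1). If h : [0,1] → ℝ is bounded and increasing, then for every m ≥ 1 the function T^m h is well defined and increasing, and for every Banach limit B the function B_h(x) = B((T^m h(x))_{m≥1}) is increasing; consequently, if h : [0,1] → ℝ is bounded of bounded variation (a difference of two bounded increasing functions) with h(0) = a and h(1) = b, then B_h is of bounded variation with B_h(0) = a and B_h(1) = b. -/
import Mathlib


open MeasureTheory unitInterval

noncomputable section

/-- A bounded real sequence. -/
def IsBddSeq (x : ℕ → ℝ) : Prop := ∃ C : ℝ, ∀ n, |x n| ≤ C

/-- A Banach limit: a linear (on bounded sequences), positive, shift-invariant and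
normalized functional on the space of bounded real sequences. -/
structure BanachLimit where
  toFun : (ℕ → ℝ) → ℝ
  map_add : ∀ x y : ℕ → ℝ, IsBddSeq x → IsBddSeq y →
    toFun (fun n => x n + y n) = toFun x + toFun y
  map_smul : ∀ (c : ℝ) (x : ℕ → ℝ), IsBddSeq x →
    toFun (fun n => c * x n) = c * toFun x
  nonneg : ∀ x : ℕ → ℝ, IsBddSeq x → (∀ n, 0 ≤ x n) → 0 ≤ toFun x
  shift : ∀ x : ℕ → ℝ, IsBddSeq x → toFun (fun n => x (n + 1)) = toFun x
  norm_one : toFun (fun _ => (1 : ℝ)) = 1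

/-- A medial limit with respect to a measure `P`: a Banach limit which commutes with
integration of uniformly bounded sequences of measurable functions. -/
def BanachLimit.IsMedial {Ω : Type*} [MeasurableSpace Ω] (B : BanachLimit)
    (P : Measure Ω) : Prop :=
  ∀ h : ℕ → Ω → ℝ, (∃ C : ℝ, ∀ m ω, |h m ω| ≤ C) → (∀ m, Measurable (h m)) →
    Measurable (fun ω => B.toFun (fun m => h m ω)) ∧
      ∫ ω, B.toFun (fun m => h m ω) ∂P = B.toFun (fun m => ∫ ω, h m ω ∂P)

/-- The operator `T`, `(Th)(x) = ∫_Ω h(f(x,ω)) dP(ω)`. -/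
def Tof {Ω : Type*} [MeasurableSpace Ω] (P : Measure Ω)
    (f : unitInterval → Ω → unitInterval) (h : unitInterval → ℝ) :
    unitInterval → ℝ :=
  fun x => ∫ ω, h (f x ω) ∂P

/-- The supremum norm of a function on `[0,1]`. -/
def supNorm (h : unitInterval → ℝ) : ℝ := ⨆ x, |h x|

/-- Membership in `𝓜([0,1],ℝ)`: `h` is bounded and `ω ↦ h (f x ω)` is measurable
for every `x`. -/
def MemM {Ω : Type*} [MeasurableSpace Ω]
    (f : unitInterval → Ω → unitInterval) (h : unitInterval → ℝ) : Prop :=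
  (∃ C : ℝ, ∀ x, |h x| ≤ C) ∧ ∀ x, Measurable fun ω => h (f x ω)

/-- The function `B_h(x) = B((T^m h(x))_{m ≥ 1})`. -/
def BLof {Ω : Type*} [MeasurableSpace Ω] (P : Measure Ω)
    (f : unitInterval → Ω → unitInterval) (B : BanachLimit)
    (h : unitInterval → ℝ) : unitInterval → ℝ :=
  fun x => B.toFun fun m => (Tof P f)^[m + 1] h x

/-- The function `g_k = Σ_{l=0}^{k-1} T^l g` (meaningful for `k ≥ 1`). -/
def gk {Ω : Type*} [MeasurableSpace Ω] (P : Measure Ω)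
    (f : unitInterval → Ω → unitInterval) (g : unitInterval → ℝ) (k : ℕ) :
    unitInterval → ℝ :=
  fun x => ∑ l ∈ Finset.range k, (Tof P f)^[l] g x

/-- The family `𝒢 = {g_k : k ≥ 1}` is bounded in the supremum norm. -/
def GBdd {Ω : Type*} [MeasurableSpace Ω] (P : Measure Ω)
    (f : unitInterval → Ω → unitInterval) (g : unitInterval → ℝ) : Prop :=
  ∃ C : ℝ, ∀ k : ℕ, 1 ≤ k → ∀ x, |gk P f g k x| ≤ C

/-- The function `B_*(x) = B((g_k(x))_{k ≥ 1})`. -/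
def BStar {Ω : Type*} [MeasurableSpace Ω] (P : Measure Ω)
    (f : unitInterval → Ω → unitInterval) (B : BanachLimit)
    (g : unitInterval → ℝ) : unitInterval → ℝ :=
  fun x => B.toFun fun k => gk P f g (k + 1) x

/-- `φ` satisfies equation (E_g): `ω ↦ φ(f(x,ω))` is measurable for every `x` and
`φ(x) = ∫_Ω φ(f(x,ω)) dP(ω) + g(x)` for every `x`. -/
def SatEq {Ω : Type*} [MeasurableSpace Ω] (P : Measure Ω)
    (f : unitInterval → Ω → unitInterval) (g φ : unitInterval → ℝ) : Prop :=
  (∀ x, Measurable fun ω => φ (f x ω)) ∧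
    ∀ x, φ x = (∫ ω, φ (f x ω) ∂P) + g x

/-- The class `𝓑_a^b` is closed under the Banach limit `B`. -/
def ClosedUnder {Ω : Type*} [MeasurableSpace Ω] (P : Measure Ω)
    (f : unitInterval → Ω → unitInterval) (𝓑 : Submodule ℝ (unitInterval → ℝ))
    (a b : ℝ) (B : BanachLimit) : Prop :=
  ∀ h : unitInterval → ℝ, h ∈ 𝓑 → h 0 = a → h 1 = b →
    BLof P f B h ∈ 𝓑 ∧ BLof P f B h 0 = a ∧ BLof P f B h 1 = b

section stmt15Helpers

variable {Ω : Type*} [MeasurableSpace Ω] (P : Measure Ω) [IsProbabilityMeasure P]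
  (f : unitInterval → Ω → unitInterval)

lemma Tof_bdd {h : unitInterval → ℝ} {C : ℝ} (hC : ∀ x, |h x| ≤ C) :
    ∀ x, |Tof P f h x| ≤ C := by
  intro x
  have := norm_integral_le_of_norm_le_const (μ := P)
    (f := fun ω => h (f x ω)) (C := C) (Filter.Eventually.of_forall fun ω => by
      simpa using hC (f x ω))
  simpa [Tof, measure_univ] using this

lemma integrable_comp (hfmeas : ∀ x, Measurable (f x))
    {h : unitInterval → ℝ} (hm : Monotone h) {C : ℝ} (hC : ∀ x, |h x| ≤ C) (x : unitInterval) :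
    Integrable (fun ω => h (f x ω)) P := by
  refine ⟨((hm.measurable).comp (hfmeas x)).aestronglyMeasurable, ?_⟩
  exact MeasureTheory.HasFiniteIntegral.of_bounded
    (C := C) (Filter.Eventually.of_forall fun ω => by simpa using hC (f x ω))

lemma Tof_mono (hfmeas : ∀ x, Measurable (f x)) (hmono : ∀ ω, Monotone fun x => f x ω)
    {h : unitInterval → ℝ} (hm : Monotone h) {C : ℝ} (hC : ∀ x, |h x| ≤ C) :
    Monotone (Tof P f h) := by
  intro x y hxy
  refine integral_mono (integrable_comp P f hfmeas hm hC x)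
    (integrable_comp P f hfmeas hm hC y) fun ω => hm (hmono ω hxy)

lemma Tof_iter_bdd {h : unitInterval → ℝ} {C : ℝ} (hC : ∀ x, |h x| ≤ C) :
    ∀ m x, |(Tof P f)^[m] h x| ≤ C := by
  intro m
  induction m with
  | zero => simpa using hC
  | succ n ih =>
      rw [Function.iterate_succ_apply']
      exact Tof_bdd P f ih

lemma Tof_iter_mono (hfmeas : ∀ x, Measurable (f x)) (hmono : ∀ ω, Monotone fun x => f x ω)
    {h : unitInterval → ℝ} (hm : Monotone h) {C : ℝ} (hC : ∀ x, |h x| ≤ C) :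
    ∀ m, Monotone ((Tof P f)^[m] h) := by
  intro m
  induction m with
  | zero => simpa using hm
  | succ n ih =>
      rw [Function.iterate_succ_apply']
      exact Tof_mono P f hfmeas hmono ih (Tof_iter_bdd P f hC n)

lemma Tof_iter_zero (hf0 : ∀ ω, f 0 ω = 0) (h : unitInterval → ℝ) :
    ∀ m, (Tof P f)^[m] h 0 = h 0 := by
  intro m
  induction m with
  | zero => rfl
  | succ n ih =>
      rw [Function.iterate_succ_apply', Tof]
      simp only [hf0, ih]
      simp [measure_univ]

lemma Tof_iter_one (hf1 : ∀ ω, f 1 ω = 1) (h : unitInterval → ℝ) :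
    ∀ m, (Tof P f)^[m] h 1 = h 1 := by
  intro m
  induction m with
  | zero => rfl
  | succ n ih =>
      rw [Function.iterate_succ_apply', Tof]
      simp only [hf1, ih]
      simp [measure_univ]

lemma Tof_iter_sub (hfmeas : ∀ x, Measurable (f x))
    (hmono : ∀ ω, Monotone fun x => f x ω)
    {h₁ h₂ : unitInterval → ℝ} (hm₁ : Monotone h₁) (hm₂ : Monotone h₂)
    {C₁ C₂ : ℝ} (hC₁ : ∀ x, |h₁ x| ≤ C₁) (hC₂ : ∀ x, |h₂ x| ≤ C₂) :
    ∀ m x, (Tof P f)^[m] (h₁ - h₂) x = (Tof P f)^[m] h₁ x - (Tof P f)^[m] h₂ x := by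
  intro m
  induction m with
  | zero => intro x; rfl
  | succ n ih =>
      intro x
      rw [Function.iterate_succ_apply', Function.iterate_succ_apply',
        Function.iterate_succ_apply']
      have e : (fun ω => (Tof P f)^[n] (h₁ - h₂) (f x ω))
          = fun ω => (Tof P f)^[n] h₁ (f x ω) - (Tof P f)^[n] h₂ (f x ω) := by
        funext ω; exact ih _
      show (∫ ω, (Tof P f)^[n] (h₁ - h₂) (f x ω) ∂P)
          = (∫ ω, (Tof P f)^[n] h₁ (f x ω) ∂P) - ∫ ω, (Tof P f)^[n] h₂ (f x ω) ∂P
      rw [e, integral_sub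
        (integrable_comp P f hfmeas (Tof_iter_mono P f hfmeas hmono hm₁ hC₁ n)
          (Tof_iter_bdd P f hC₁ n) x)
        (integrable_comp P f hfmeas (Tof_iter_mono P f hfmeas hmono hm₂ hC₂ n)
          (Tof_iter_bdd P f hC₂ n) x)]

lemma BanachLimit.const (B : BanachLimit) (c : ℝ) : B.toFun (fun _ => c) = c := by
  have := B.map_smul c (fun _ => 1) ⟨1, fun n => by norm_num⟩
  simpa [B.norm_one] using this

lemma BanachLimit.sub (B : BanachLimit) (x y : ℕ → ℝ) (hx : IsBddSeq x) (hy : IsBddSeq y) :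
    B.toFun (fun n => x n - y n) = B.toFun x - B.toFun y := by
  obtain ⟨Cy, hCy⟩ := hy
  have hny : IsBddSeq (fun n => -1 * y n) := ⟨Cy, fun n => by simpa [abs_neg] using hCy n⟩
  have h1 := B.map_add x (fun n => -1 * y n) hx hny
  have h2 := B.map_smul (-1) y ⟨Cy, hCy⟩
  have : B.toFun (fun n => x n + -1 * y n) = B.toFun x + -1 * B.toFun y := by rw [h1, h2]
  simpa [sub_eq_add_neg, neg_one_mul] using this

lemma BanachLimit.mono (B : BanachLimit) (x y : ℕ → ℝ) (hx : IsBddSeq x) (hy : IsBddSeq y)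
    (hle : ∀ n, x n ≤ y n) : B.toFun x ≤ B.toFun y := by
  have hnn := B.nonneg (fun n => y n - x n) ?_ (fun n => sub_nonneg.2 (hle n))
  · have := B.sub y x hy hx
    linarith [this ▸ hnn]
  · obtain ⟨Cx, hCx⟩ := hx; obtain ⟨Cy, hCy⟩ := hy
    exact ⟨Cy + Cx, fun n => (abs_sub (y n) (x n)).trans (add_le_add (hCy n) (hCx n))⟩

lemma BanachLimit.abs_le (B : BanachLimit) (x : ℕ → ℝ) {C : ℝ} (hC : ∀ n, |x n| ≤ C) :
    |B.toFun x| ≤ C := by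
  have hx : IsBddSeq x := ⟨C, hC⟩
  have h1 : B.toFun x ≤ C := by
    have := B.mono x (fun _ => C) hx ⟨|C|, fun _ => le_rfl⟩
      (fun n => (le_abs_self _).trans (hC n))
    simpa [B.const] using this
  have h2 : -C ≤ B.toFun x := by
    have := B.mono (fun _ => -C) x ⟨|C|, fun _ => le_of_eq (abs_neg C)⟩ hx
      (fun n => neg_le_of_abs_le (hC n))
    simpa [B.const] using this
  exact _root_.abs_le.2 ⟨h2, h1⟩

end stmt15Helpers

/-- Under (H1), if `h` is bounded and increasing, then every `T^m h`
is well defined (the relevant integrands are measurable) and increasing for `m ≥ 1`,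
and `B_h` is increasing for every Banach limit `B`; consequently, if `h` is bounded
of bounded variation (a difference of two bounded increasing functions) with
`h(0) = a`, `h(1) = b`, then `B_h` is of bounded variation with `B_h(0) = a`,
`B_h(1) = b`. -/
theorem stmt_15 {Ω : Type*} [MeasurableSpace Ω] (P : Measure Ω) [IsProbabilityMeasure P]
    (f : unitInterval → Ω → unitInterval)
    (hf0 : ∀ ω, f 0 ω = 0) (hf1 : ∀ ω, f 1 ω = 1)
    (hmono : ∀ ω, Monotone fun x => f x ω)
    (hfmeas : ∀ x, Measurable (f x))
    (B : BanachLimit) (a b : ℝ) :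
    (∀ h : unitInterval → ℝ, (∃ C : ℝ, ∀ x, |h x| ≤ C) → Monotone h →
      (∀ m : ℕ, ∀ x, Measurable fun ω => (Tof P f)^[m] h (f x ω)) ∧
      (∀ m : ℕ, 1 ≤ m → Monotone ((Tof P f)^[m] h)) ∧
      Monotone (BLof P f B h)) ∧
    (∀ h h₁ h₂ : unitInterval → ℝ,
      (∃ C : ℝ, ∀ x, |h₁ x| ≤ C) → (∃ C : ℝ, ∀ x, |h₂ x| ≤ C) →
      Monotone h₁ → Monotone h₂ → h = h₁ - h₂ → h 0 = a → h 1 = b →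
      ∃ u v : unitInterval → ℝ,
        (∃ C : ℝ, ∀ x, |u x| ≤ C) ∧ (∃ C : ℝ, ∀ x, |v x| ≤ C) ∧
        Monotone u ∧ Monotone v ∧ BLof P f B h = u - v ∧
        BLof P f B h 0 = a ∧ BLof P f B h 1 = b) := by
  constructor
  · rintro h ⟨C, hC⟩ hm
    refine ⟨?_, ?_, ?_⟩
    · intro m x
      exact ((Tof_iter_mono P f hfmeas hmono hm hC m).measurable).comp (hfmeas x)
    · intro m _
      exact Tof_iter_mono P f hfmeas hmono hm hC m
    · intro x y hxy
      refine B.mono _ _ ⟨C, fun n => Tof_iter_bdd P f hC (n + 1) x⟩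
        ⟨C, fun n => Tof_iter_bdd P f hC (n + 1) y⟩ fun n =>
        Tof_iter_mono P f hfmeas hmono hm hC (n + 1) hxy
  · rintro h h₁ h₂ ⟨C₁, hC₁⟩ ⟨C₂, hC₂⟩ hm₁ hm₂ rfl h0 h1
    refine ⟨BLof P f B h₁, BLof P f B h₂, ⟨C₁, fun x => B.abs_le _
      (fun n => Tof_iter_bdd P f hC₁ (n + 1) x)⟩,
      ⟨C₂, fun x => B.abs_le _ (fun n => Tof_iter_bdd P f hC₂ (n + 1) x)⟩,
      ?_, ?_, ?_, ?_, ?_⟩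
    · intro x y hxy
      exact B.mono _ _ ⟨C₁, fun n => Tof_iter_bdd P f hC₁ (n + 1) x⟩
        ⟨C₁, fun n => Tof_iter_bdd P f hC₁ (n + 1) y⟩ fun n =>
        Tof_iter_mono P f hfmeas hmono hm₁ hC₁ (n + 1) hxy
    · intro x y hxy
      exact B.mono _ _ ⟨C₂, fun n => Tof_iter_bdd P f hC₂ (n + 1) x⟩
        ⟨C₂, fun n => Tof_iter_bdd P f hC₂ (n + 1) y⟩ fun n =>
        Tof_iter_mono P f hfmeas hmono hm₂ hC₂ (n + 1) hxy
    · funext x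
      have e : (fun m => (Tof P f)^[m + 1] (h₁ - h₂) x)
          = fun m => (Tof P f)^[m + 1] h₁ x - (Tof P f)^[m + 1] h₂ x := by
        funext m
        exact Tof_iter_sub P f hfmeas hmono hm₁ hm₂ hC₁ hC₂ (m + 1) x
      simp only [BLof, Pi.sub_apply, e]
      exact B.sub _ _ ⟨C₁, fun n => Tof_iter_bdd P f hC₁ (n + 1) x⟩
        ⟨C₂, fun n => Tof_iter_bdd P f hC₂ (n + 1) x⟩
    · have e : (fun m => (Tof P f)^[m + 1] (h₁ - h₂) (0 : unitInterval))
          = fun _ : ℕ => a := by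
        funext m
        rw [Tof_iter_zero P f hf0]
        exact h0
      simp only [BLof, e, B.const]
    · have e : (fun m => (Tof P f)^[m + 1] (h₁ - h₂) (1 : unitInterval))
          = fun _ : ℕ => b := by
        funext m
        rw [Tof_iter_one P f hf1]
        exact h1
      simp only [BLof, e, B.const]
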